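/- arXiv:2604.09118 — 2 statements merged into one kernel-verified Lean document; each statement's English description precedes it below -/
import Mathlib

section
/- Let G ∈ ℝ^{p×m}, F ∈ ℝ^{p×n}, and w ∈ ℝ^p, and define X := {x ∈ ℝ^n : ∃ z ∈ ℝ^m, G z ≤ w + F x}, where the inequality is componentwise. Then X is a closed subset of ℝ^n. -/
/-!
The set `X` is the preimage, under the affine map `x ↦ w + F x`, of
`K = {y | ∃ z, G z ≤ y}`, and `K` is the image of the nonnegative orthant under
`(a, b, s) ↦ G (a - b) + s`, i.e. a finitely generated convex cone. By the conic Carathéodory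
theorem every point of such a cone is a nonnegative combination of a linearly independent
subfamily of the generators, so the cone is a finite union of cones with linearly independent
generators. Each of these is the image of a closed orthant under an injective linear map from a
finite-dimensional space, hence a closed embedding, so it is closed.
-/

open Function Set Matrix

section Caratheodory

variable {ι E : Type*} [Fintype ι]

lemma exists_ne_zero_support_subset_sum_smul_eq_zero_of_not_linearIndepOn
    {R : Type*} [Ring R] [AddCommGroup E] [Module R E] {v : ι → E} {s : Set ι}
    (h : ¬LinearIndepOn R v s) :
    ∃ g : ι → R, g ≠ 0 ∧ support g ⊆ s ∧ ∑ i, g i • v i = 0 := by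
  classical
  rw [← s.coe_toFinset, not_linearIndepOn_finset_iff] at h
  obtain ⟨f, hf, i, hi, hfi⟩ := h
  refine ⟨fun i => if i ∈ s.toFinset then f i else 0, fun h0 => hfi ?_, fun j hj => ?_, ?_⟩
  · simpa [hi] using congrFun h0 i
  · by_contra hjs
    exact hj (by simp [hjs])
  · simpa only [ite_smul, zero_smul, Finset.sum_ite_mem, Finset.univ_inter] using hf

variable {𝕜 : Type*} [Field 𝕜] [LinearOrder 𝕜] [IsStrictOrderedRing 𝕜]

/-- The minimum ratio test: move from `c` along `-g` until a coordinate hits zero. -/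
lemma exists_nonneg_sub_smul_eq_zero {c g : ι → 𝕜} (hc : 0 ≤ c) (hg : ∃ i, 0 < g i) :
    ∃ t : 𝕜, 0 ≤ c - t • g ∧ ∃ k, 0 < g k ∧ (c - t • g) k = 0 := by
  classical
  obtain ⟨i₀, hi₀⟩ := hg
  have hT : (Finset.univ.filter fun i => 0 < g i).Nonempty := ⟨i₀, by simpa using hi₀⟩
  obtain ⟨k, hk, hmin⟩ := Finset.exists_min_image _ (fun i => c i / g i) hT
  simp only [Finset.mem_filter, Finset.mem_univ, true_and] at hk hmin
  refine ⟨c k / g k, fun i => ?_, k, hk, by simp [div_mul_cancel₀ _ hk.ne']⟩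
  simp only [Pi.zero_apply, Pi.sub_apply, Pi.smul_apply, smul_eq_mul, sub_nonneg]
  rcases lt_or_ge 0 (g i) with hgi | hgi
  · exact (le_div_iff₀ hgi).mp (hmin i hgi)
  · exact (mul_nonpos_of_nonneg_of_nonpos (div_nonneg (hc k) hk.le) hgi).trans (hc i)

variable [AddCommGroup E] [Module 𝕜 E]

lemma exists_nonneg_sum_smul_eq_of_not_linearIndepOn {v : ι → E} {c : ι → 𝕜} (hc : 0 ≤ c)
    (h : ¬LinearIndepOn 𝕜 v (support c)) :
    ∃ c' : ι → 𝕜, 0 ≤ c' ∧ ∑ i, c' i • v i = ∑ i, c i • v i ∧ support c' ⊂ support c := by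
  obtain ⟨g, hg0, hgc, hgv⟩ := exists_ne_zero_support_subset_sum_smul_eq_zero_of_not_linearIndepOn h
  obtain ⟨g, hgc, hgv, hpos⟩ :
      ∃ g : ι → 𝕜, support g ⊆ support c ∧ ∑ i, g i • v i = 0 ∧ ∃ i, 0 < g i := by
    obtain ⟨i, hi⟩ := Function.ne_iff.mp hg0
    rcases hi.lt_or_gt with hneg | hpos
    · exact ⟨-g, by rwa [support_neg], by simp [neg_smul, hgv], i, by simpa using hneg⟩
    · exact ⟨g, hgc, hgv, i, hpos⟩
  obtain ⟨t, hnonneg, k, hk, hzero⟩ := exists_nonneg_sub_smul_eq_zero hc hpos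
  have hsub : support (c - t • g) ⊆ support c :=
    (support_sub _ _).trans (union_subset subset_rfl ((support_smul_subset_right _ _).trans hgc))
  refine ⟨c - t • g, hnonneg, ?_,
    (ssubset_iff_of_subset hsub).mpr ⟨k, hgc hk.ne', notMem_support.mpr hzero⟩⟩
  simp only [Pi.sub_apply, Pi.smul_apply, smul_eq_mul, sub_smul, mul_smul, Finset.sum_sub_distrib,
    ← Finset.smul_sum, hgv, smul_zero, sub_zero]

/-- The conic Carathéodory theorem. -/
theorem exists_nonneg_linearIndepOn_support_sum_smul_eq (v : ι → E) {c : ι → 𝕜} (hc : 0 ≤ c) :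
    ∃ d : ι → 𝕜, 0 ≤ d ∧ LinearIndepOn 𝕜 v (support d) ∧ ∑ i, d i • v i = ∑ i, c i • v i := by
  obtain ⟨d, ⟨hd, hdv⟩, hmin⟩ := (measure fun d : ι → 𝕜 => (support d).ncard).wf.has_min
    {d | 0 ≤ d ∧ ∑ i, d i • v i = ∑ i, c i • v i} ⟨c, hc, rfl⟩
  refine ⟨d, hd, by_contra fun hli => ?_, hdv⟩
  obtain ⟨d', hd', hd'v, hss⟩ := exists_nonneg_sum_smul_eq_of_not_linearIndepOn hd hli
  exact hmin d' ⟨hd', hd'v.trans hdv⟩ (ncard_lt_ncard hss)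

lemma linearCombination_image_Ici_eq_iUnion (v : ι → E) :
    Fintype.linearCombination 𝕜 v '' Ici 0 = ⋃ (s : Finset ι) (_ : LinearIndepOn 𝕜 v s),
      Fintype.linearCombination 𝕜 (fun i : s => v i) '' Ici 0 := by
  classical
  have sum_subtype (s : Finset ι) (c : ι → 𝕜) (hc : ∀ i ∉ s, c i = 0) :
      ∑ i : s, c i • v i = ∑ i, c i • v i :=
    (Finset.sum_coe_sort s fun i => c i • v i).trans
      (Finset.sum_subset (Finset.subset_univ s) fun i _ hi => by simp [hc i hi])
  ext y
  simp only [mem_image, mem_iUnion, mem_Ici, Fintype.linearCombination_apply]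
  constructor
  · rintro ⟨c, hc, rfl⟩
    obtain ⟨d, hd, hli, hdc⟩ := exists_nonneg_linearIndepOn_support_sum_smul_eq v hc
    refine ⟨(support d).toFinset, by rwa [coe_toFinset], fun i => d i, fun i => hd i, ?_⟩
    rw [← hdc]
    exact sum_subtype _ d fun i hi => by simpa using hi
  · rintro ⟨s, -, d, hd, rfl⟩
    refine ⟨fun i => if h : i ∈ s then d ⟨i, h⟩ else 0, fun i => ?_, ?_⟩
    · by_cases h : i ∈ s
      · simpa [h] using hd ⟨i, h⟩
      · simp [h]
    · rw [← sum_subtype s _ fun i hi => dif_neg hi]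
      simp

end Caratheodory

section ClosedCone

variable {ι E : Type*} [Fintype ι] [AddCommGroup E] [Module ℝ E] [TopologicalSpace E]
  [IsTopologicalAddGroup E] [ContinuousSMul ℝ E] [T2Space E]

lemma LinearIndependent.isClosed_linearCombination_image_Ici {u : ι → E}
    (hu : LinearIndependent ℝ u) : IsClosed (Fintype.linearCombination ℝ u '' Ici 0) :=
  (LinearMap.isClosedEmbedding_of_injective (LinearMap.ker_eq_bot.mpr
    hu.fintypeLinearCombination_injective)).isClosedMap _ isClosed_Ici

theorem isClosed_linearCombination_image_Ici (v : ι → E) :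
    IsClosed (Fintype.linearCombination ℝ v '' Ici 0) := by
  rw [linearCombination_image_Ici_eq_iUnion]
  exact isClosed_iUnion_of_finite fun s => isClosed_iUnion_of_finite fun hs =>
    LinearIndependent.isClosed_linearCombination_image_Ici hs

theorem LinearMap.isClosed_image_Ici (A : (ι → ℝ) →ₗ[ℝ] E) : IsClosed (A '' Ici 0) := by
  classical
  have hA : A = Fintype.linearCombination ℝ fun i => A (Pi.single i 1) := by
    ext i
    simp
  rw [hA]
  exact isClosed_linearCombination_image_Ici _

end ClosedCone

lemma Matrix.setOf_exists_mulVec_le_eq_image {ι κ R : Type*} [Fintype κ] [CommRing R]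
    [LinearOrder R] [IsOrderedRing R] (G : Matrix ι κ R) :
    {y | ∃ z, G *ᵥ z ≤ y} =
      ((G.mulVecLin ∘ₗ (LinearMap.funLeft R R (Sum.inl ∘ Sum.inl) -
        LinearMap.funLeft R R (Sum.inl ∘ Sum.inr)) + LinearMap.funLeft R R Sum.inr :
          ((κ ⊕ κ) ⊕ ι → R) →ₗ[R] ι → R) '' Ici 0) := by
  ext y
  simp only [mem_ofPred_eq, mem_image, mem_Ici]
  constructor
  · rintro ⟨z, hz⟩
    refine ⟨Sum.elim (Sum.elim z⁺ z⁻) (y - G *ᵥ z), ?_, ?_⟩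
    · rintro ((j | j) | i)
      · exact posPart_nonneg (z j)
      · exact negPart_nonneg (z j)
      · exact sub_nonneg.mpr (hz i)
    · change G *ᵥ (z⁺ - z⁻) + (y - G *ᵥ z) = y
      rw [posPart_sub_negPart, add_sub_cancel]
  · rintro ⟨c, hc, rfl⟩
    exact ⟨_, le_add_of_nonneg_right fun i => hc (Sum.inr i)⟩

/-- **The projected feasible set is closed.**
`X := {x | ∃ z, G z ≤ w + F x}` (componentwise inequality) is a closed subset of `ℝ^n`. -/
theorem feasible_set_closed
    {p m n : ℕ}
    (G : Matrix (Fin p) (Fin m) ℝ) (F : Matrix (Fin p) (Fin n) ℝ)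
    (w : Fin p → ℝ) :
    IsClosed {x : Fin n → ℝ | ∃ z : Fin m → ℝ,
      ∀ i : Fin p, G.mulVec z i ≤ (w + F.mulVec x) i} := by
  have hK : IsClosed {y | ∃ z, G *ᵥ z ≤ y} := by
    rw [Matrix.setOf_exists_mulVec_le_eq_image]
    exact LinearMap.isClosed_image_Ici _
  exact hK.preimage (by fun_prop : Continuous fun x => w + F *ᵥ x)
end

section
/- Let x₀, d ∈ ℝ^n with d ≠ 0, let a < b be reals, and let β be a random variable uniformly distributed on the interval [a, b]. Then the random vector x₀ + β d is distributed according to the uniform probability measure on the segment S := {x₀ + α d : α ∈ [a, b]}, i.e., its law equals the one-dimensional Hausdorff measure restricted to S normalized by the length ‖d‖·(b − a) of S. -/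
open MeasureTheory
open scoped ENNReal NNReal

/-! The parametrization `α ↦ x₀ + α • d` is `‖d‖` times an isometry of `ℝ` onto a line, so it
carries one-dimensional Hausdorff measure (Lebesgue measure) on `[a, b]` to `‖d‖⁻¹ • μH[1]` on
the segment; pushing the law of `β` forward along it gives the uniform law on the segment. -/

section LineParametrization

variable {E : Type*} [NormedAddCommGroup E] [NormedSpace ℝ E] [MeasurableSpace E] [BorelSpace E]

theorem hausdorffMeasure_image_add_smul (x₀ d : E) (s : Set ℝ) :
    μH[1] ((fun α : ℝ => x₀ + α • d) '' s) = ‖d‖₊ * volume s := by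
  have hline : (fun α : ℝ => x₀ + α • d) = AffineMap.lineMap x₀ (x₀ + d) := by
    ext α
    simp [AffineMap.lineMap_apply, add_comm]
  rw [hline, hausdorffMeasure_lineMap_image, hausdorffMeasure_real, nndist_comm,
    nndist_eq_nnnorm, add_sub_cancel_left, ENNReal.smul_def, smul_eq_mul]

theorem restrict_hausdorffMeasure_image_add_smul (x₀ d : E) (s : Set ℝ) :
    (μH[1]).restrict ((fun α : ℝ => x₀ + α • d) '' s)
      = (‖d‖₊ : ℝ≥0∞) • (volume.restrict s).map (fun α : ℝ => x₀ + α • d) := by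
  set f : ℝ → E := fun α => x₀ + α • d
  have hf : Measurable f := by fun_prop
  ext A hA
  rw [Measure.restrict_apply hA, Measure.smul_apply, Measure.map_apply hf hA,
    Measure.restrict_apply (hf hA), smul_eq_mul, Set.inter_comm, ← Set.image_inter_preimage,
    hausdorffMeasure_image_add_smul, Set.inter_comm]

end LineParametrization

theorem hit_and_run_update_uniform_on_segment_general
    {Ω : Type*} [MeasurableSpace Ω] (P : Measure Ω)
    {n : ℕ} (x₀ d : EuclideanSpace ℝ (Fin n)) (hd : d ≠ 0)
    (a b : ℝ)
    (β : Ω → ℝ) (hβmeas : Measurable β)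
    (hβlaw : P.map β = (ENNReal.ofReal (b - a))⁻¹ • volume.restrict (Set.Icc a b)) :
    P.map (fun ω => x₀ + β ω • d)
      = (ENNReal.ofReal (‖d‖ * (b - a)))⁻¹ •
          (μH[1]).restrict {x : EuclideanSpace ℝ (Fin n) |
            ∃ α ∈ Set.Icc a b, x = x₀ + α • d} := by
  set f : ℝ → EuclideanSpace ℝ (Fin n) := fun α => x₀ + α • d
  have hsegment : {x | ∃ α ∈ Set.Icc a b, x = x₀ + α • d} = f '' Set.Icc a b := by
    ext x
    simp [f, eq_comm]
  have hd₀ : (‖d‖₊ : ℝ≥0∞) ≠ 0 := by simpa using hd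
  have hscale :
      (ENNReal.ofReal (‖d‖ * (b - a)))⁻¹ * (‖d‖₊ : ℝ≥0∞) = (ENNReal.ofReal (b - a))⁻¹ := by
    rw [ENNReal.ofReal_mul (norm_nonneg d), ofReal_norm, enorm_eq_nnnorm,
      ENNReal.mul_inv (Or.inl hd₀) (Or.inl ENNReal.coe_ne_top), mul_right_comm,
      ENNReal.inv_mul_cancel hd₀ ENNReal.coe_ne_top, one_mul]
  calc P.map (fun ω => x₀ + β ω • d)
      = (P.map β).map f := (Measure.map_map (g := f) (by fun_prop) hβmeas).symm
    _ = (ENNReal.ofReal (b - a))⁻¹ • (volume.restrict (Set.Icc a b)).map f := by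
        rw [hβlaw, Measure.map_smul]
    _ = _ := by
        rw [hsegment, restrict_hausdorffMeasure_image_add_smul, smul_smul, hscale]

/-- **The Hit-and-Run update produces a uniform point on the segment.**
If `β` is uniform on `[a, b]` (`a < b`) and `d ≠ 0`, then `x₀ + β d` is
uniformly distributed on the segment `S = {x₀ + α d : α ∈ [a, b]}`: its law is
the one-dimensional Hausdorff measure restricted to `S`, normalized by the
length `‖d‖ (b - a)` of `S`. -/
theorem hit_and_run_update_uniform_on_segment
    {Ω : Type*} [MeasurableSpace Ω] (P : Measure Ω) [IsProbabilityMeasure P]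
    {n : ℕ} (x₀ d : EuclideanSpace ℝ (Fin n)) (hd : d ≠ 0)
    (a b : ℝ) (hab : a < b)
    (β : Ω → ℝ) (hβmeas : Measurable β)
    (hβlaw : P.map β = (ENNReal.ofReal (b - a))⁻¹ • volume.restrict (Set.Icc a b)) :
    P.map (fun ω => x₀ + β ω • d)
      = (ENNReal.ofReal (‖d‖ * (b - a)))⁻¹ •
          (μH[1]).restrict {x : EuclideanSpace ℝ (Fin n) |
            ∃ α ∈ Set.Icc a b, x = x₀ + α • d} :=
  hit_and_run_update_uniform_on_segment_general P x₀ d hd a b β hβmeas hβlaw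
end
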